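/- Let ν be a Krull valuation on K[x], μ an extension to K̄[x], Q ∈ K[x] a key polynomial for ν, and a ∈ K̄ an optimizing root of Q. Then μ_{x−a}(Q) = μ(Q), where μ_{x−a} is the truncation of μ at x−a. -/

import Mathlib

/-!
Over `K̄` the monic polynomial `Q` splits as `∏ (x - r)` over its roots. Reading the
`(x - a)`-expansion of `f` off its Taylor coefficients at `a`, the truncation satisfies
`μ_{x-a}(f) ≤ μ(f)` and is super-multiplicative, `μ_{x-a}(f) + μ_{x-a}(g) ≤ μ_{x-a}(fg)`.
For a root `r`, optimality of `a` gives `μ(x - r) ≤ μ(x - a)`, hence also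
`μ(x - r) ≤ μ(a - r)`, so both coefficients of `x - r = (x - a) + (a - r)` respect the bound
and `μ_{x-a}(x - r) = μ(x - r)`. Multiplying over the roots gives `μ_{x-a}(Q) = μ(Q)`.
-/

open Polynomial

variable {K : Type*} [Field K] {Γ : Type*} [AddCommGroup Γ] [LinearOrder Γ] [IsOrderedAddMonoid Γ]

/-- The `i`-th coefficient of the `q`-expansion of `f`. -/
noncomputable def qCoeff (q f : Polynomial K) (i : ℕ) : Polynomial K :=
  f / q ^ i % q

/-- The truncation `ν_q` of `w` at `q` :
`ν_q(f) = min_i ν(f_i q^i)` over the `q`-expansion `f = Σ f_i q^i`. -/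
noncomputable def trunc (w : Polynomial K → WithTop Γ) (q f : Polynomial K) : WithTop Γ :=
  (Finset.range (f.natDegree + 1)).inf fun i => w (qCoeff q f i * q ^ i)

/-- `b` is an admissible index in the definition of `ε(f)`. -/
def ValidIdx (w : Polynomial K → WithTop Γ) (f : Polynomial K) (b : ℕ) : Prop :=
  1 ≤ b ∧ b ≤ f.natDegree ∧ w f ≠ ⊤ ∧ w (Polynomial.hasseDeriv b f) ≠ ⊤

/-- `(w(g) - w(∂_c g))/c ≤ (w(f) - w(∂_b f))/b`, written multiplicatively
(cross-multiplied) to stay inside `WithTop Γ`. -/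
def RatioLE (w : Polynomial K → WithTop Γ) (g : Polynomial K) (c : ℕ)
    (f : Polynomial K) (b : ℕ) : Prop :=
  b • w g + c • w (Polynomial.hasseDeriv b f) ≤ c • w f + b • w (Polynomial.hasseDeriv c g)

/-- `f` is a generator of the support of `w`. -/
def IsGenSupp (w : Polynomial K → WithTop Γ) (f : Polynomial K) : Prop :=
  ∀ g, w g = ⊤ ↔ f ∣ g

/-- `ε(f) ≥ ε(Q)` (for the valuation `w`), taking the conventions
`ε(f) = -∞` if `deg f = 0` (more generally, if the defining set is empty) and
`ε(f) = ∞` if `f` generates the support of `w`. -/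
def EpsGE (w : Polynomial K → WithTop Γ) (f Q : Polynomial K) : Prop :=
  IsGenSupp w f ∨
    (¬ IsGenSupp w Q ∧
      ((∀ c, ¬ ValidIdx w Q c) ∨
        ∃ b, ValidIdx w f b ∧ ∀ c, ValidIdx w Q c → RatioLE w Q c f b))

/-- `Q` is a key polynomial for `w` : `Q` is monic and
`ε(f) ≥ ε(Q)` implies `deg f ≥ deg Q`. -/
def IsKeyPoly (w : Polynomial K → WithTop Γ) (Q : Polynomial K) : Prop :=
  Q.Monic ∧ ∀ f : Polynomial K, f ≠ 0 → EpsGE w f Q → Q.natDegree ≤ f.natDegree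

section Truncation

variable (μ : AddValuation K[X] (WithTop Γ)) (a : K)

theorem qCoeff_X_sub_C (f : K[X]) (i : ℕ) :
    qCoeff (X - C a) f i = C ((taylor a f).coeff i) := by
  have hmon : ((X - C a) ^ i).Monic := (monic_X_sub_C a).pow i
  have hrem : (taylor a (f %ₘ (X - C a) ^ i)).coeff i = 0 := by
    refine coeff_eq_zero_of_degree_lt ?_
    rw [degree_taylor]
    simpa [degree_X_sub_C] using degree_modByMonic_lt f hmon
  have hcoeff : (taylor a f).coeff i = (f /ₘ (X - C a) ^ i).eval a := by
    conv_lhs => rw [← modByMonic_add_div f ((X - C a) ^ i)]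
    rw [map_add, coeff_add, hrem, zero_add, taylor_mul, taylor_pow, map_sub, taylor_X, taylor_C,
      add_sub_cancel_right, coeff_X_pow_mul', if_pos le_rfl, Nat.sub_self, taylor_coeff_zero]
  rw [qCoeff, ← divByMonic_eq_div f hmon, mod_X_sub_C_eq_C_eval, hcoeff]

theorem le_trunc_X_sub_C_iff {v : WithTop Γ} {f : K[X]} :
    v ≤ trunc μ (X - C a) f ↔ ∀ i, v ≤ μ (C ((taylor a f).coeff i)) + i • μ (X - C a) := by
  simp only [trunc, Finset.le_inf_iff, Finset.mem_range, qCoeff_X_sub_C, μ.map_mul, μ.map_pow]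
  refine ⟨fun h i => ?_, fun h i _ => h i⟩
  rcases lt_or_ge i (f.natDegree + 1) with hi | hi
  · exact h i hi
  · rw [coeff_eq_zero_of_natDegree_lt (by rw [natDegree_taylor]; omega), C_0, μ.map_zero,
      top_add]
    exact le_top

theorem trunc_X_sub_C_le (f : K[X]) : trunc μ (X - C a) f ≤ μ f := by
  conv_rhs => rw [← sum_taylor_eq f a, sum_over_range _ (by simp), natDegree_taylor]
  refine μ.map_le_sum fun i _ => ?_
  rw [μ.map_mul, μ.map_pow]
  exact (le_trunc_X_sub_C_iff μ a).1 le_rfl i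

theorem add_le_trunc_X_sub_C_mul (f g : K[X]) :
    trunc μ (X - C a) f + trunc μ (X - C a) g ≤ trunc μ (X - C a) (f * g) := by
  set γ := μ (X - C a)
  have hf := (le_trunc_X_sub_C_iff μ a).1 (le_refl (trunc μ (X - C a) f))
  have hg := (le_trunc_X_sub_C_iff μ a).1 (le_refl (trunc μ (X - C a) g))
  refine (le_trunc_X_sub_C_iff μ a).2 fun i => ?_
  rw [taylor_mul, coeff_mul, map_sum]
  refine Finset.sum_induction _ (fun x => _ ≤ μ x + i • γ) (fun x y hx hy => ?_) (by simp) ?_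
  · calc _ ≤ min (μ x + i • γ) (μ y + i • γ) := le_min hx hy
      _ = min (μ x) (μ y) + i • γ := min_add_add_right _ _ _
      _ ≤ μ (x + y) + i • γ := add_le_add_left (μ.map_add x y) _
  · rintro ⟨j, k⟩ hjk
    rw [Finset.HasAntidiagonal.mem_antidiagonal] at hjk
    calc _ ≤ (μ (C ((taylor a f).coeff j)) + j • γ) + (μ (C ((taylor a g).coeff k)) + k • γ) :=
          add_le_add (hf j) (hg k)
      _ = _ := by rw [C_mul, μ.map_mul, ← hjk, add_nsmul]; abel

theorem trunc_X_sub_C_of_le {b : K} (hb : μ (X - C b) ≤ μ (X - C a)) :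
    trunc μ (X - C a) (X - C b) = μ (X - C b) := by
  refine le_antisymm (trunc_X_sub_C_le μ a _) ((le_trunc_X_sub_C_iff μ a).2 fun i => ?_)
  have htaylor : taylor a (X - C b) = X + C (a - b) := by
    rw [map_sub, taylor_X, taylor_C, C_sub]; ring
  rcases i with _ | _ | i
  · have hC : C (a - b) = (X - C b) - (X - C a) := by rw [C_sub]; ring
    simpa [htaylor, hC] using μ.map_le_sub le_rfl hb
  · simpa [htaylor, coeff_X] using hb
  · simp [htaylor, coeff_X]

theorem trunc_X_sub_C_multiset_prod {s : Multiset K[X]}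
    (hs : ∀ f ∈ s, trunc μ (X - C a) f = μ f) :
    trunc μ (X - C a) s.prod = μ s.prod := by
  refine Multiset.prod_induction (fun f => trunc μ (X - C a) f = μ f) s (fun f g hf hg => ?_) ?_ hs
  · refine le_antisymm (trunc_X_sub_C_le μ a _) ?_
    rw [μ.map_mul, ← hf, ← hg]
    exact add_le_trunc_X_sub_C_mul μ a f g
  · refine le_antisymm (trunc_X_sub_C_le μ a _) ((le_trunc_X_sub_C_iff μ a).2 fun i => ?_)
    rcases i with _ | i <;> simp [coeff_one]

end Truncation

theorem stmt7_general {L : Type*} [Field L] [Algebra K L] [IsAlgClosure K L]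
    (ν : AddValuation (Polynomial K) (WithTop Γ)) (μ : AddValuation (Polynomial L) (WithTop Γ))
    (Q : Polynomial K) (hQ : IsKeyPoly (⇑ν) Q)
    (a : L)
    (hopt : ∀ b : L, Polynomial.aeval b Q = 0 → μ (X - C b) ≤ μ (X - C a)) :
    trunc (⇑μ) (X - C a) (Q.map (algebraMap K L)) = μ (Q.map (algebraMap K L)) := by
  have : IsAlgClosed L := IsAlgClosure.isAlgClosed K
  set P := Q.map (algebraMap K L)
  have hP : P = (P.roots.map fun r => X - C r).prod :=
    (IsAlgClosed.splits P).eq_prod_roots_of_monic (hQ.1.map _)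
  rw [hP]
  refine trunc_X_sub_C_multiset_prod μ a fun f hf => ?_
  obtain ⟨r, hr, rfl⟩ := Multiset.mem_map.1 hf
  refine trunc_X_sub_C_of_le μ a (hopt r ?_)
  rw [← eval_map_algebraMap]
  exact isRoot_of_mem_roots hr

/-- If `Q` is a key polynomial for `ν` and `a` an optimizing root of `Q`,
then `μ_{x-a}(Q) = μ(Q)`. -/
theorem stmt7 {L : Type*} [Field L] [Algebra K L] [IsAlgClosure K L]
    (ν : AddValuation (Polynomial K) (WithTop Γ)) (μ : AddValuation (Polynomial L) (WithTop Γ))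
    (hKrull : ∀ p : Polynomial K, p ≠ 0 → ν p ≠ ⊤)
    (hext : ∀ p : Polynomial K, ν p = μ (p.map (algebraMap K L)))
    (Q : Polynomial K) (hQ : IsKeyPoly (⇑ν) Q)
    (a : L) (ha : Polynomial.aeval a Q = 0)
    (hopt : ∀ b : L, Polynomial.aeval b Q = 0 → μ (X - C b) ≤ μ (X - C a)) :
    trunc (⇑μ) (X - C a) (Q.map (algebraMap K L)) = μ (Q.map (algebraMap K L)) :=
  stmt7_general ν μ Q hQ a hopt
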